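/- arXiv:2102.07745 — 5 statements merged into one kernel-verified Lean document; each statement's English description precedes it below -/
import Mathlib

section
/- Let p be a prime number with p ≡ 1 (mod 4), and let F be the finite field with p² elements. If y ∈ F satisfies y² + y^(2p) = 0 (equivalently, the trace of y² from F to its prime field 𝔽_p is zero), then y = 0. -/
/-- If `p ≡ 1 (mod 4)` is prime and `F` is the field with `p²` elements, then any
`y ∈ F` with `y² + y^(2p) = 0` must be zero. -/
theorem stmt_0 (p : ℕ) (hp : p.Prime) (hp4 : p % 4 = 1)
    (F : Type*) [Field F] [Fintype F] (hF : Fintype.card F = p ^ 2)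
    (y : F) (hy : y ^ 2 + y ^ (2 * p) = 0) : y = 0 := by
  by_contra hy0
  -- characteristic of F is p
  have hchar : CharP F (ringChar F) := ringChar.charP F
  have hrp : ringChar F = p := by
    have h0 : ((p ^ 2 : ℕ) : F) = 0 := by
      rw [← hF]; exact FiniteField.cast_card_eq_zero F
    have hdvd : ringChar F ∣ p ^ 2 := (CharP.cast_eq_zero_iff F (ringChar F) _).mp h0
    have hrprime : (ringChar F).Prime := by
      have : Fintype.card F ≠ 1 := by
        rw [hF]; exact Nat.one_lt_pow (by norm_num) hp.one_lt |>.ne'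
      exact CharP.char_is_prime F (ringChar F)
    exact (Nat.prime_dvd_prime_iff_eq hrprime hp).mp (hrprime.dvd_of_dvd_pow hdvd)
  have hpodd : p % 2 = 1 := Nat.odd_of_mod_four_eq_one hp4
  -- y ^ (2*(p-1)) = -1
  have h1 : y ^ (2 * p) = y ^ (2 * (p - 1)) * y ^ 2 := by
    rw [← pow_add]
    congr 1
    have : 1 ≤ p := hp.one_lt.le
    omega
  have h2 : y ^ (2 * (p - 1)) * y ^ 2 = (-1) * y ^ 2 := by
    rw [← h1, neg_one_mul]
    linear_combination hy
  have h3 : y ^ (2 * (p - 1)) = -1 := by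
    have := mul_right_cancel₀ (pow_ne_zero 2 hy0) h2
    simpa using this
  -- raise to (p+1)/2, which is odd
  obtain ⟨m, hm⟩ : ∃ m, p = 4 * m + 1 := ⟨p / 4, by omega⟩
  have hexp : 2 * (p - 1) * (2 * m + 1) = p ^ 2 - 1 := by
    subst hm
    have h : (4 * m + 1) ^ 2 = 16 * m ^ 2 + 8 * m + 1 := by ring
    have h2 : 2 * (4 * m + 1 - 1) * (2 * m + 1) = 16 * m ^ 2 + 8 * m := by
      have h3 : 4 * m + 1 - 1 = 4 * m := rfl
      rw [h3]; ring
    omega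
  have h4 : y ^ (p ^ 2 - 1) = -1 := by
    rw [← hexp, pow_mul, h3]
    have : Odd (2 * m + 1) := odd_two_mul_add_one m
    exact this.neg_one_pow
  have h5 : y ^ (p ^ 2 - 1) = 1 := by
    rw [← hF]; exact FiniteField.pow_card_sub_one_eq_one y hy0
  rw [h5] at h4
  -- contradiction: 1 = -1 in characteristic p odd
  have : (2 : F) = 0 := by linear_combination h4
  have : (ringChar F) ∣ 2 := (CharP.cast_eq_zero_iff F (ringChar F) 2).mp (by exact_mod_cast this)
  rw [hrp] at this
  have hle := Nat.le_of_dvd (by norm_num) this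
  have h2p := hp.two_le
  omega
end

section
/- Let p be a prime number with p ≡ 1 (mod 4), and let F be the finite field with p² elements. Then the set of pairs (x, y) ∈ F × F satisfying x^p − x = y² has exactly p elements (namely the pairs (x, 0) with x in the prime field 𝔽_p). -/
/-- If `p ≡ 1 (mod 4)` is prime and `F` is the field with `p²` elements, then the
affine Artin–Schreier curve `x^p − x = y²` has exactly `p` points over `F`. -/
theorem stmt_1 (p : ℕ) (hp : p.Prime) (hp4 : p % 4 = 1)
    (F : Type*) [Field F] [Fintype F] (hF : Fintype.card F = p ^ 2) :
    Nat.card {q : F × F // q.1 ^ p - q.1 = q.2 ^ 2} = p := by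
  haveI : Fact p.Prime := ⟨hp⟩
  have hp2 : 2 ≤ p := hp.two_le
  have hp5 : 5 ≤ p := by omega
  -- characteristic of F is p
  have hcast : (p : F) = 0 := by
    have h0 := FiniteField.cast_card_eq_zero F
    rw [hF] at h0
    push_cast at h0
    exact pow_eq_zero_iff (by norm_num) |>.mp h0
  have hrc : ringChar F = p := by
    have hd : ringChar F ∣ p := ringChar.dvd hcast
    rcases (Nat.Prime.eq_one_or_self_of_dvd hp _ hd) with h | h
    · exact absurd h (CharP.ringChar_ne_one)
    · exact h
  haveI : CharP F p := hrc ▸ ringChar.charP F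
  -- key : y must be 0
  have key : ∀ x y : F, x ^ p - x = y ^ 2 → y = 0 := by
    intro x y h
    by_contra hy
    have hx2 : x ^ p ^ 2 = x := by rw [← hF]; exact FiniteField.pow_card x
    have hfrob : (x ^ p - x) ^ p = x ^ p ^ 2 - x ^ p := by
      rw [sub_pow_char, ← pow_mul, sq]
    have h1 : (y ^ 2) ^ p + y ^ 2 = 0 := by
      rw [← h, hfrob, hx2]; ring
    have hy2 : (y ^ 2) ^ p = -(y ^ 2) := by linear_combination h1
    have hyne : y ^ 2 ≠ 0 := pow_ne_zero 2 hy
    obtain ⟨k, hk⟩ : ∃ k, 2 * k = p + 1 := ⟨(p + 1) / 2, by omega⟩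
    have hkodd : Odd k := by rw [Nat.odd_iff]; omega
    have h2 : (y ^ 2) ^ (p - 1) = -1 := by
      have hcan : (y ^ 2) ^ (p - 1) * y ^ 2 = -1 * y ^ 2 := by
        rw [← pow_succ, Nat.sub_add_cancel (by omega : 1 ≤ p), hy2]; ring
      exact mul_right_cancel₀ hyne hcan
    have he : 2 * ((p - 1) * k) = p ^ 2 - 1 := by
      have hsq : p ^ 2 - 1 ^ 2 = (p + 1) * (p - 1) := Nat.sq_sub_sq p 1
      have : 2 * ((p - 1) * k) = (2 * k) * (p - 1) := by ring
      rw [this, hk]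
      omega
    have h3 : ((y ^ 2) ^ (p - 1)) ^ k = 1 := by
      rw [← pow_mul, ← pow_mul, he]
      have := FiniteField.pow_card_sub_one_eq_one y hy
      rwa [hF] at this
    rw [h2, hkodd.neg_one_pow] at h3
    have h2z : (2 : F) = 0 := by linear_combination -h3
    have := (CharP.cast_eq_zero_iff F p 2).mp (by exact_mod_cast h2z)
    have := Nat.le_of_dvd (by norm_num) this
    omega
  -- reduce to counting fixed points of Frobenius
  have e : {q : F × F // q.1 ^ p - q.1 = q.2 ^ 2} ≃ {x : F // x ^ p = x} :=
    { toFun := fun q => ⟨q.1.1, by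
        have hz := key q.1.1 q.1.2 q.2
        have := q.2
        rw [hz] at this
        simpa [sub_eq_zero] using this⟩
      invFun := fun x => ⟨(x.1, 0), by rw [x.2]; ring⟩
      left_inv := fun q => by
        apply Subtype.ext
        exact Prod.ext rfl (key q.1.1 q.1.2 q.2).symm
      right_inv := fun x => rfl }
  rw [Nat.card_congr e]
  classical
  -- lower bound : ZMod p embeds in the fixed points
  have hlow : p ≤ Nat.card {x : F // x ^ p = x} := by
    have ginj : Function.Injective (fun a : ZMod p =>
        (⟨ZMod.castHom dvd_rfl F a, by rw [← map_pow, ZMod.pow_card]⟩ :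
          {x : F // x ^ p = x})) := by
      intro a b hab
      exact (ZMod.castHom dvd_rfl F).injective (Subtype.ext_iff.mp hab)
    have := Nat.card_le_card_of_injective _ ginj
    simpa [Nat.card_zmod] using this
  -- upper bound : fixed points are roots of X^p - X
  have hup : Nat.card {x : F // x ^ p = x} ≤ p := by
    set f : Polynomial F := Polynomial.X ^ p - Polynomial.X with hfdef
    have hdeg : f.natDegree = p := by
      rw [hfdef, Polynomial.natDegree_sub_eq_left_of_natDegree_lt, Polynomial.natDegree_X_pow]
      rw [Polynomial.natDegree_X_pow, Polynomial.natDegree_X]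
      omega
    have hf0 : f ≠ 0 := by
      intro h
      rw [h, Polynomial.natDegree_zero] at hdeg
      omega
    have hsub : Finset.univ.filter (fun x : F => x ^ p = x) ⊆ f.roots.toFinset := by
      intro x hx
      have hx' := (Finset.mem_filter.mp hx).2
      rw [Multiset.mem_toFinset, Polynomial.mem_roots hf0]
      simp [hfdef, Polynomial.IsRoot, sub_eq_zero, hx']
    calc Nat.card {x : F // x ^ p = x}
        = (Finset.univ.filter (fun x : F => x ^ p = x)).card := by
          rw [Nat.card_eq_fintype_card, Fintype.card_subtype]
      _ ≤ f.roots.toFinset.card := Finset.card_le_card hsub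
      _ ≤ Multiset.card f.roots := f.roots.toFinset_card_le
      _ ≤ f.natDegree := f.card_roots'
      _ = p := hdeg
  omega
end

section
/- Let p be a prime with p ≡ 1 (mod 4), let Ω be an algebraic closure of 𝔽_p = ℤ/pℤ, and let r ∈ 𝔽_p. Then the set of pairs (x, y) ∈ Ω × Ω satisfying x^p − x = y², x^p + r = x, and y^p = y is finite of cardinality p·(ℓ(r) + 1), where ℓ(r) ∈ {−1, 0, 1} is the Legendre symbol of r modulo p (with ℓ(0) = 0). -/
open Polynomial
lemma fixed_mem_range (p : ℕ) [hp : Fact p.Prime] (Ω : Type*) [Field Ω]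
    [Algebra (ZMod p) Ω] {y : Ω} (hy : y ^ p = y) :
    ∃ t : ZMod p, algebraMap (ZMod p) Ω t = y := by
  classical
  set q : ZMod p →+* Ω := algebraMap (ZMod p) Ω with hq
  have hp1 : 1 < p := hp.out.one_lt
  have hne : (X ^ p - X : Polynomial Ω) ≠ 0 := FiniteField.X_pow_card_sub_X_ne_zero Ω hp1
  set F : Finset Ω := (X ^ p - X : Polynomial Ω).roots.toFinset with hF
  set G : Finset Ω := Finset.univ.image q with hG
  have hGF : G ⊆ F := by
    intro a ha
    rw [hG, Finset.mem_image] at ha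
    obtain ⟨t, -, rfl⟩ := ha
    rw [hF, Multiset.mem_toFinset, mem_roots hne]
    simp [← map_pow, ZMod.pow_card]
  have hGcard : G.card = p := by
    rw [hG, Finset.card_image_of_injective _ q.injective, Finset.card_univ, ZMod.card]
  have hFcard : F.card ≤ p := by
    calc F.card ≤ Multiset.card (X ^ p - X : Polynomial Ω).roots := Multiset.toFinset_card_le _
    _ ≤ (X ^ p - X : Polynomial Ω).natDegree := (X ^ p - X : Polynomial Ω).card_roots'
    _ = p := FiniteField.X_pow_card_sub_X_natDegree_eq Ω hp1
  have hEq : G = F := Finset.eq_of_subset_of_card_le hGF (hGcard ▸ hFcard)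
  have hyF : y ∈ F := by
    rw [hF, Multiset.mem_toFinset, mem_roots hne]
    simp [hy]
  rw [← hEq, hG, Finset.mem_image] at hyF
  obtain ⟨t, -, ht⟩ := hyF
  exact ⟨t, ht⟩

/-- For a prime `p ≡ 1 (mod 4)`, an algebraic closure `Ω` of `𝔽_p`, and `r ∈ 𝔽_p`,
the set of `(x, y) ∈ Ω × Ω` with `x^p − x = y²`, `x^p + r = x`, `y^p = y` is finite
of cardinality `p·(ℓ(r) + 1)` where `ℓ(r)` is the Legendre symbol of `r` mod `p`. -/
theorem stmt_2 (p : ℕ) [hp : Fact p.Prime] (hp4 : p % 4 = 1)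
    (Ω : Type*) [Field Ω] [Algebra (ZMod p) Ω] [IsAlgClosure (ZMod p) Ω]
    (r : ZMod p) :
    letI S : Set (Ω × Ω) :=
      {q | q.1 ^ p - q.1 = q.2 ^ 2 ∧ q.1 ^ p + algebraMap (ZMod p) Ω r = q.1 ∧
        q.2 ^ p = q.2}
    letI ℓ : ℤ := if r = 0 then 0 else if IsSquare r then 1 else -1
    S.Finite ∧ (Nat.card S : ℤ) = p * (ℓ + 1) := by
  classical
  set S : Set (Ω × Ω) :=
    {q | q.1 ^ p - q.1 = q.2 ^ 2 ∧ q.1 ^ p + algebraMap (ZMod p) Ω r = q.1 ∧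
      q.2 ^ p = q.2} with hSdef
  set ℓ : ℤ := if r = 0 then 0 else if IsSquare r then 1 else -1 with hℓdef
  set q : ZMod p →+* Ω := algebraMap (ZMod p) Ω with hqdef
  haveI : CharP Ω p := charP_of_injective_algebraMap q.injective p
  haveI : IsAlgClosed Ω := IsAlgClosure.isAlgClosed (ZMod p)
  have hp1 : 1 < p := hp.out.one_lt
  have hpodd : p % 2 = 1 := by omega
  set rb : Ω := q r with hrb
  -- fixed points of frobenius on elements
  have key : ∀ y : Ω, y ^ p = y → ∃ t : ZMod p, q t = y := fun y hy =>
    fixed_mem_range p Ω hy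
  have key' : ∀ t : ZMod p, (q t) ^ p = q t := by
    intro t; rw [← map_pow, ZMod.pow_card]
  -- a root of x^p + rb = x
  obtain ⟨x₀, hx₀⟩ : ∃ x₀ : Ω, x₀ ^ p + rb = x₀ := by
    have hne : (Polynomial.X ^ p - Polynomial.X : Polynomial Ω) ≠ 0 :=
      FiniteField.X_pow_card_sub_X_ne_zero Ω hp1
    have hdeg : (Polynomial.X ^ p - Polynomial.X : Polynomial Ω).degree = p := by
      rw [Polynomial.degree_eq_natDegree hne,
        FiniteField.X_pow_card_sub_X_natDegree_eq Ω hp1]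
    have hdeg2 : (Polynomial.X ^ p - Polynomial.X + Polynomial.C rb : Polynomial Ω).degree
        = p := by
      rcases eq_or_ne rb 0 with h | h
      · simp [h, hdeg]
      · rw [Polynomial.degree_add_eq_left_of_degree_lt, hdeg]
        rw [hdeg, Polynomial.degree_C h]
        exact_mod_cast WithBot.coe_lt_coe.mpr (by positivity)
    obtain ⟨z, hz⟩ := IsAlgClosed.exists_root
      (Polynomial.X ^ p - Polynomial.X + Polynomial.C rb : Polynomial Ω)
      (by rw [hdeg2]; exact_mod_cast (by omega : (p : ℕ) ≠ 0))
    refine ⟨z, ?_⟩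
    have := hz
    simp only [Polynomial.IsRoot, Polynomial.eval_add, Polynomial.eval_sub,
      Polynomial.eval_pow, Polynomial.eval_X, Polynomial.eval_C] at this
    linear_combination this
  set T : Set Ω := {x : Ω | x ^ p + rb = x} with hT
  set U : Set Ω := {y : Ω | y ^ 2 = -rb ∧ y ^ p = y} with hU
  have hST : S = T ×ˢ U := by
    ext ⟨x, y⟩
    simp only [S, T, U, Set.mem_setOf_eq, Set.mem_prod]
    constructor
    · rintro ⟨h1, h2, h3⟩
      exact ⟨h2, by linear_combination h2 - h1, h3⟩
    · rintro ⟨h2, hy2, h3⟩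
      exact ⟨by linear_combination h2 - hy2, h2, h3⟩
  -- T is the image of ZMod p
  have hTim : T = (fun t : ZMod p => x₀ + q t) '' Set.univ := by
    ext x
    simp only [T, Set.mem_setOf_eq, Set.image_univ, Set.mem_range]
    constructor
    · intro hx
      have hsub : (x - x₀) ^ p = x - x₀ := by
        rw [sub_pow_char]
        linear_combination hx - hx₀
      obtain ⟨t, ht⟩ := key _ hsub
      exact ⟨t, by linear_combination ht⟩
    · rintro ⟨t, rfl⟩
      rw [add_pow_char, key']
      linear_combination hx₀
  have hTinj : Function.Injective (fun t : ZMod p => x₀ + q t) := by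
    intro a b hab
    exact q.injective (by simpa using hab)
  have hTfin : T.Finite := by
    rw [hTim]; exact (Set.finite_univ).image _
  have hTcard : T.ncard = p := by
    rw [hTim, Set.ncard_image_of_injective _ hTinj, Set.ncard_univ,
      Nat.card_eq_fintype_card, ZMod.card]
  -- card of S via product
  have hScard : S.ncard = T.ncard * U.ncard := by
    rw [hST, ← Nat.card_coe_set_eq, ← Nat.card_coe_set_eq, ← Nat.card_coe_set_eq,
      Nat.card_congr (Equiv.Set.prod T U), Nat.card_prod]
  have hSfin : ∀ (hu : U.Finite), S.Finite := fun hu => hST ▸ hTfin.prod hu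
  -- analyze U by cases on r
  rcases eq_or_ne r 0 with hr0 | hr0
  · -- r = 0
    have hU0 : U = {0} := by
      ext y
      simp only [U, Set.mem_setOf_eq, Set.mem_singleton_iff, hr0, hrb, map_zero, neg_zero]
      constructor
      · rintro ⟨h1, -⟩
        exact pow_eq_zero_iff (two_ne_zero) |>.mp h1
      · rintro rfl
        exact ⟨by simp, zero_pow (by omega)⟩
    refine ⟨hSfin (hU0 ▸ Set.finite_singleton 0), ?_⟩
    rw [Nat.card_coe_set_eq, hScard, hU0, Set.ncard_singleton, hTcard]
    rw [hℓdef, if_pos hr0]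
    push_cast
    ring
  · -- r ≠ 0 ; get i with i * i = -1
    obtain ⟨i, hi⟩ : IsSquare (-1 : ZMod p) :=
      ZMod.exists_sq_eq_neg_one_iff.mpr (by omega)
    have hine : i ≠ 0 := by rintro rfl; simp at hi
    by_cases hrs : IsSquare r
    · obtain ⟨s, hs⟩ := id hrs
      have hsne : s ≠ 0 := by rintro rfl; simp at hs; exact hr0 hs
      set a : Ω := q (i * s) with ha
      have hane : a ≠ 0 := by
        simp only [ha, hqdef]
        rw [_root_.map_ne_zero]
        exact mul_ne_zero hine hsne
      have ha2 : a ^ 2 = -rb := by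
        rw [ha, ← map_pow, hrb, ← map_neg]
        congr 1
        linear_combination (-s^2) * hi + hs
      have hanea : a ≠ -a := by
        intro h
        have h2 : (2 : Ω) * a = 0 := by linear_combination h
        rcases mul_eq_zero.mp h2 with h3 | h3
        · have hd : (p : ℕ) ∣ 2 := (CharP.cast_eq_zero_iff Ω p 2).mp (by exact_mod_cast h3)
          have := (Nat.prime_dvd_prime_iff_eq hp.out Nat.prime_two).mp hd
          omega
        · exact hane h3
      have hUpair : U = {a, -a} := by
        ext y
        simp only [U, Set.mem_setOf_eq, Set.mem_insert_iff, Set.mem_singleton_iff]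
        constructor
        · rintro ⟨h1, -⟩
          have : (y - a) * (y + a) = 0 := by linear_combination h1 - ha2
          rcases mul_eq_zero.mp this with h | h
          · left; linear_combination h
          · right; linear_combination h
        · rintro (rfl | rfl)
          · exact ⟨ha2, key' _⟩
          · exact ⟨by rw [neg_sq]; exact ha2,
              by rw [(Nat.odd_iff.mpr hpodd).neg_pow, key']⟩
      refine ⟨hSfin (hUpair ▸ ((Set.finite_singleton (-a)).insert a)), ?_⟩
      rw [Nat.card_coe_set_eq, hScard, hUpair, Set.ncard_pair hanea, hTcard,
        hℓdef, if_neg hr0, if_pos hrs]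
      push_cast
      ring
    · have hUempty : U = ∅ := by
        ext y
        simp only [U, Set.mem_setOf_eq, Set.mem_empty_iff_false, iff_false]
        rintro ⟨h1, h3⟩
        obtain ⟨t, ht⟩ := key y h3
        have ht2 : t ^ 2 = -r := by
          apply q.injective
          rw [map_pow, map_neg, ht, h1, hrb]
        exact hrs ⟨i * t, by linear_combination t ^ 2 * hi + ht2⟩
      refine ⟨hSfin (hUempty ▸ Set.finite_empty), ?_⟩
      rw [Nat.card_coe_set_eq, hScard, hUempty, Set.ncard_empty, hℓdef,
        if_neg hr0, if_neg hrs]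
      simp
end

section
/- Let p be a prime number, let V be a nonzero finite-dimensional vector space over ℚ, and let f be a linear endomorphism of V with f ∘ f = p·id_V. Then dim V is even and the characteristic polynomial of f equals (X² − p)^(dim V / 2). -/
/-!
Since `f² = p` and `X² - p` is irreducible over `ℚ`, every irreducible factor `r` of the
characteristic polynomial is associated to `X² - p`: a root `μ` of `r` in an algebraic closure
is an eigenvalue of the base change of `f`, hence a root of `X² - p`, so both polynomials are
associated to the minimal polynomial of `μ`. Being monic, the characteristic polynomial is then
a power of `X² - p`, and comparing degrees gives the exponent `dim V / 2`.
-/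

open Polynomial UniqueFactorizationMonoid Module

namespace Module.End

variable {K V : Type*} [Field K] [AddCommGroup V] [Module K V] [FiniteDimensional K V]
  {f : End K V} {q : K[X]}

theorem aeval_eq_zero_of_isRoot_charpoly_map {L : Type*} [Field L] [Algebra K L]
    (hq : aeval f q = 0) {μ : L} (hμ : (f.charpoly.map (algebraMap K L)).IsRoot μ) :
    aeval μ q = 0 := by
  have hqL : aeval (f.baseChange L) (q.map (algebraMap K L)) = 0 := by
    rw [aeval_map_algebraMap]
    exact (aeval_algHom_apply (baseChangeHom K L V) f q).trans (by rw [hq, map_zero])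
  have hμ' : HasEigenvalue (f.baseChange L) μ := by
    rwa [hasEigenvalue_iff_isRoot_charpoly, LinearMap.charpoly_baseChange]
  rw [← eval_map_algebraMap]
  exact (isRoot_of_hasEigenvalue hμ').dvd (minpoly.dvd L _ hqL)

theorem associated_of_irreducible_dvd_charpoly (hq : Irreducible q) (hfq : aeval f q = 0)
    {r : K[X]} (hr : Irreducible r) (hrf : r ∣ f.charpoly) : Associated r q := by
  obtain ⟨μ, hμ⟩ := IsAlgClosed.exists_aeval_eq_zero (AlgebraicClosure K) r
    (degree_pos_of_irreducible hr).ne'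
  have hμq : aeval μ q = 0 := aeval_eq_zero_of_isRoot_charpoly_map hfq <| by
    rw [IsRoot, eval_map_algebraMap]
    exact aeval_eq_zero_of_dvd_aeval_eq_zero hrf hμ
  have hmin : Irreducible (minpoly K μ) := minpoly.irreducible (Algebra.IsIntegral.isIntegral μ)
  exact (hmin.associated_of_dvd hr (minpoly.dvd K μ hμ)).symm.trans
    (hmin.associated_of_dvd hq (minpoly.dvd K μ hμq))

theorem exists_charpoly_eq_pow_of_aeval_eq_zero (hq : Irreducible q) (hmon : q.Monic)
    (hfq : aeval f q = 0) : ∃ k, f.charpoly = q ^ k := by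
  classical
  have hfactor {m : K[X]} (hm : m ∈ normalizedFactors f.charpoly) : m = q :=
    (associated_of_irreducible_dvd_charpoly hq hfq (irreducible_of_normalized_factor m hm)
      (dvd_of_mem_normalizedFactors hm)).eq_of_normalized (normalize_normalized_factor m hm)
      hmon.normalize_eq_self
  obtain ⟨k, hk⟩ := exists_associated_prime_pow_of_unique_normalized_factor hfactor
    f.charpoly_monic.ne_zero
  exact ⟨k, (eq_of_monic_of_associated (hmon.pow k) f.charpoly_monic hk).symm⟩

theorem charpoly_eq_pow_of_aeval_eq_zero (hq : Irreducible q) (hmon : q.Monic)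
    (hfq : aeval f q = 0) :
    q.natDegree ∣ finrank K V ∧ f.charpoly = q ^ (finrank K V / q.natDegree) := by
  obtain ⟨k, hk⟩ := exists_charpoly_eq_pow_of_aeval_eq_zero hq hmon hfq
  have hdim : finrank K V = k * q.natDegree := by
    rw [← f.charpoly_natDegree, hk, hmon.natDegree_pow]
  refine ⟨hdim ▸ dvd_mul_left _ _, ?_⟩
  rw [hk, hdim, Nat.mul_div_cancel _ hq.natDegree_pos]

end Module.End

theorem irreducible_X_sq_sub_prime {p : ℕ} (hp : p.Prime) : Irreducible (X ^ 2 - C (p : ℚ)) :=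
  X_pow_sub_C_irreducible_of_prime Nat.prime_two fun b hb ↦
    hp.prime.not_isSquare <| Rat.isSquare_natCast_iff.mp ⟨b, by rw [← hb, sq]⟩

theorem stmt_3_general (p : ℕ) (hp : p.Prime)
    (V : Type*) [AddCommGroup V] [Module ℚ V] [FiniteDimensional ℚ V]
    (f : V →ₗ[ℚ] V)
    (hf : f ∘ₗ f = (p : ℚ) • LinearMap.id) :
    Even (Module.finrank ℚ V) ∧
      LinearMap.charpoly f =
        (Polynomial.X ^ 2 - Polynomial.C (p : ℚ)) ^ (Module.finrank ℚ V / 2) := by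
  have hfq : aeval f (X ^ 2 - C (p : ℚ)) = 0 := by
    rw [map_sub, map_pow, aeval_X, aeval_C, sq, sub_eq_zero]
    exact hf.trans (Algebra.algebraMap_eq_smul_one _).symm
  have hpow := Module.End.charpoly_eq_pow_of_aeval_eq_zero (irreducible_X_sq_sub_prime hp)
    (monic_X_pow_sub_C _ two_ne_zero) hfq
  rwa [natDegree_X_pow_sub_C, ← even_iff_two_dvd] at hpow

/-- If `f` is an endomorphism of a nonzero finite-dimensional `ℚ`-vector space `V`
with `f ∘ f = p · id`, then `dim V` is even and the characteristic polynomial of `f`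
is `(X² − p)^(dim V / 2)`. -/
theorem stmt_3 (p : ℕ) (hp : p.Prime)
    (V : Type*) [AddCommGroup V] [Module ℚ V] [FiniteDimensional ℚ V]
    (hV : Nontrivial V) (f : V →ₗ[ℚ] V)
    (hf : f ∘ₗ f = (p : ℚ) • LinearMap.id) :
    Even (Module.finrank ℚ V) ∧
      LinearMap.charpoly f =
        (Polynomial.X ^ 2 - Polynomial.C (p : ℚ)) ^ (Module.finrank ℚ V / 2) :=
  stmt_3_general p hp V f hf
end

section
/- Let K be a field and let P ∈ K[X] be a separable polynomial whose degree is 5 or 6. Suppose the Galois group Gal(P) of (the splitting field of) P over K has a normal subgroup of order 5. Then the order of Gal(P) divides 20, and P has an irreducible factor over K of degree exactly 5. -/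
/-!
There are at most `6 < 2 * 5` roots, so the normal subgroup `H` of order 5 has exactly one orbit
`O` of size 5 on them and fixes the remaining root, if any. Since `Gal(P)` permutes the `H`-orbits,
`O` is a whole `Gal(P)`-orbit, so the minimal polynomial of a root in `O` is an irreducible factor
of degree 5. An element centralizing `H` can be corrected by an element of `H` to fix a point of
`O`; it then fixes `O` pointwise, hence every root, hence is trivial. So `C(H) = H`, and
`Gal(P) / H` embeds into `Aut(H)`, which has order 4.
-/

open MulAction Subgroup Polynomial

namespace MulAction

variable {G S : Type*} [Group G] [MulAction G S] {H : Subgroup G} {p : ℕ}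

theorem ncard_orbit_eq_one_or_prime (hp : p.Prime) (hH : Nat.card H = p) (x : S) :
    (orbit H x).ncard = 1 ∨ (orbit H x).ncard = p := by
  have : Finite H := Nat.finite_of_card_ne_zero (hH ▸ hp.ne_zero)
  refine hp.eq_one_or_self_of_dvd _ ?_
  rw [← hH, ← index_stabilizer]
  exact (stabilizer H x).index_dvd_card

theorem orbit_eq_of_ncard_eq_prime [Finite S] (hp : p.Prime) (hS : Nat.card S ≤ p + 1)
    {x y : S} (hx : (orbit H x).ncard = p) (hy : (orbit H y).ncard = p) :
    orbit H x = orbit H y := by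
  refine (orbit.eq_or_disjoint x y).resolve_right fun hdisj => ?_
  have := Set.ncard_union_eq hdisj (Set.toFinite _) (Set.toFinite _)
  have := Set.ncard_le_card (orbit H x ∪ orbit H y)
  have := hp.two_le
  omega

theorem exists_ncard_orbit_eq_prime [FaithfulSMul G S] (hp : p.Prime) (hH : Nat.card H = p) :
    ∃ a : S, (orbit H a).ncard = p := by
  by_contra! hne
  suffices H = ⊥ by simp [this, hp.ne_one.symm] at hH
  refine (eq_bot_iff_forall H).mpr fun h hh => eq_of_smul_eq_smul (α := S) fun x => ?_
  have hx := (ncard_orbit_eq_one_or_prime hp hH x).resolve_right (hne x)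
  obtain ⟨y, hy⟩ := Set.ncard_eq_one.mp hx
  have hhx : (⟨h, hh⟩ : H) • x = y := by simpa [hy] using mem_orbit x (⟨h, hh⟩ : H)
  have hxy : x = y := by simpa [hy] using mem_orbit_self (M := H) x
  rw [one_smul]
  exact hhx.trans hxy.symm

theorem orbit_eq_orbit_subgroup [H.Normal] [Finite S] (hp : p.Prime) (hS : Nat.card S ≤ p + 1)
    {a : S} (ha : (orbit H a).ncard = p) : orbit G a = orbit H a := by
  refine le_antisymm ?_ (orbit_subgroup_subset H a)
  rintro _ ⟨g, rfl⟩
  have : orbit H (g • a) = orbit H a := by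
    refine orbit_eq_of_ncard_eq_prime hp hS ?_ ha
    rw [← smul_orbit_eq_orbit_smul, Set.ncard_smul_set, ha]
  exact this ▸ mem_orbit_self (g • a)

theorem eq_one_of_mem_centralizer_of_smul_eq [FaithfulSMul G S] [Finite S]
    (hS : Nat.card S ≤ p + 1) {a : S} (ha : (orbit H a).ncard = p) {τ : G}
    (hτ : τ ∈ centralizer H) (hτa : τ • a = a) : τ = 1 := by
  have hfixO : ∀ x ∈ orbit H a, τ • x = x := by
    rintro _ ⟨h, rfl⟩
    change τ • (h • a) = h • a
    rw [Subgroup.smul_def, smul_smul, ← mem_centralizer_iff.mp hτ h h.2, mul_smul, hτa]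
  have hcompl : (orbit H a)ᶜ.ncard ≤ 1 := by
    have := Set.ncard_add_ncard_compl (orbit H a)
    omega
  refine eq_of_smul_eq_smul (α := S) fun x => ?_
  rw [one_smul]
  by_cases hx : x ∈ orbit H a
  · exact hfixO x hx
  · have hτx : τ • x ∉ orbit H a := fun h => hx (smul_left_cancel τ (hfixO _ h) ▸ h)
    exact (Set.ncard_le_one (Set.toFinite _)).mp hcompl _ hτx _ hx

theorem centralizer_eq_of_ncard_orbit_eq_prime [H.Normal] [FaithfulSMul G S] [Finite S] (hp : p.Prime)
    (hH : Nat.card H = p) (hS : Nat.card S ≤ p + 1) {a : S} (ha : (orbit H a).ncard = p) :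
    centralizer H = H := by
  have : Fact p.Prime := ⟨hp⟩
  have : IsCyclic H := isCyclic_of_prime_card hH
  have hHC : H ≤ centralizer H := le_centralizer_iff_isMulCommutative.mpr inferInstance
  refine le_antisymm (fun τ hτ => ?_) hHC
  obtain ⟨h, hha⟩ : τ • a ∈ orbit H a := orbit_eq_orbit_subgroup hp hS ha ▸ mem_orbit a τ
  change (h : G) • a = τ • a at hha
  have : (h : G)⁻¹ * τ = 1 :=
    eq_one_of_mem_centralizer_of_smul_eq hS ha (mul_mem (inv_mem (hHC h.2)) hτ)
      (by rw [mul_smul, ← hha, inv_smul_smul])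
  exact inv_mul_eq_one.mp this ▸ h.2

end MulAction

theorem MulAut.ker_conjNormal {G : Type*} [Group G] (H : Subgroup G) [H.Normal] :
    (MulAut.conjNormal : G →* MulAut H).ker = centralizer H := by
  ext g
  simp only [MonoidHom.mem_ker, MulEquiv.ext_iff, Subtype.ext_iff, MulAut.conjNormal_apply,
    MulAut.one_apply, mem_centralizer_iff, SetLike.mem_coe, Subtype.forall]
  exact forall₂_congr fun h _ => by rw [mul_inv_eq_iff_eq_mul, eq_comm]

theorem Subgroup.card_dvd_mul_totient_of_centralizer_le {G : Type*} [Group G] {H : Subgroup G}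
    [H.Normal] [Finite H] [IsCyclic H] (hC : centralizer H ≤ H) :
    Nat.card G ∣ Nat.card H * (Nat.card H).totient := by
  rw [← (MulAut.conjNormal : G →* MulAut H).ker.card_mul_index, Subgroup.index_ker,
    MulAut.ker_conjNormal, ← IsCyclic.card_mulAut]
  exact mul_dvd_mul (card_dvd_of_le hC) (card_subgroup_dvd_card _)

namespace Polynomial.Gal

variable {K : Type*} [Field K]

instance faithfulSMul_rootSet_splittingField (P : K[X]) :
    FaithfulSMul P.Gal (P.rootSet P.SplittingField) :=
  ⟨fun h => Gal.ext P fun x hx => congrArg Subtype.val (h ⟨x, hx⟩)⟩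

theorem rootSet_minpoly_eq_image_orbit {P : K[X]} (a : P.rootSet P.SplittingField) :
    (minpoly K (a : P.SplittingField)).rootSet P.SplittingField = Subtype.val '' orbit P.Gal a := by
  have hint : IsIntegral K (a : P.SplittingField) := .of_finite K _
  ext y
  constructor
  · intro hy
    have hmin : minpoly K y = minpoly K (a : P.SplittingField) :=
      (minpoly.eq_of_irreducible_of_monic (minpoly.irreducible hint) (mem_rootSet.mp hy).2
        (minpoly.monic hint)).symm
    obtain ⟨g, rfl⟩ := (Normal.minpoly_eq_iff_mem_orbit P.SplittingField).mp hmin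
    exact ⟨g • a, mem_orbit a g, rfl⟩
  · rintro ⟨_, ⟨g, rfl⟩, rfl⟩
    refine mem_rootSet.mpr ⟨minpoly.ne_zero hint, ?_⟩
    change aeval (g (a : P.SplittingField)) _ = 0
    rw [aeval_algHom_apply, minpoly.aeval, map_zero]

theorem natDegree_minpoly_eq_ncard_orbit {P : K[X]} (hP : P.Separable)
    (a : P.rootSet P.SplittingField) :
    (minpoly K (a : P.SplittingField)).natDegree = (orbit P.Gal a).ncard := by
  have hdvd : minpoly K (a : P.SplittingField) ∣ P := minpoly.dvd K _ (mem_rootSet.mp a.2).2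
  have hsplits := (SplittingField.splits P).of_dvd (map_ne_zero hP.ne_zero) (map_dvd _ hdvd)
  rw [← card_rootSet_eq_natDegree (hP.of_dvd hdvd) hsplits, ← Nat.card_eq_fintype_card,
    Nat.card_coe_set_eq, rootSet_minpoly_eq_image_orbit,
    Set.ncard_image_of_injective _ Subtype.val_injective]

end Polynomial.Gal

/-- If `P` is a separable polynomial of degree 5 or 6 over a field `K` whose Galois
group has a normal subgroup of order 5, then `|Gal(P)|` divides 20 and `P` has an
irreducible factor over `K` of degree exactly 5. -/
theorem stmt_5 (K : Type*) [Field K] (P : Polynomial K) (hsep : P.Separable)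
    (hdeg : P.natDegree = 5 ∨ P.natDegree = 6)
    (H : Subgroup P.Gal) (hH : H.Normal) (hHcard : Nat.card H = 5) :
    Nat.card P.Gal ∣ 20 ∧
      ∃ Q : Polynomial K, Irreducible Q ∧ Q ∣ P ∧ Q.natDegree = 5 := by
  have hp : Nat.Prime 5 := by norm_num
  have : Fact (Nat.Prime 5) := ⟨hp⟩
  have : Finite H := Nat.finite_of_card_ne_zero (by omega)
  have : IsCyclic H := isCyclic_of_prime_card hHcard
  have hroots : Nat.card (P.rootSet P.SplittingField) ≤ 5 + 1 := by
    rw [Nat.card_eq_fintype_card, card_rootSet_eq_natDegree hsep (SplittingField.splits P)]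
    omega
  obtain ⟨a, ha⟩ := exists_ncard_orbit_eq_prime (S := P.rootSet P.SplittingField) hp hHcard
  refine ⟨?_, minpoly K (a : P.SplittingField), minpoly.irreducible (.of_finite K _),
    minpoly.dvd K _ (mem_rootSet.mp a.2).2, ?_⟩
  · have := card_dvd_mul_totient_of_centralizer_le (centralizer_eq_of_ncard_orbit_eq_prime hp hHcard hroots ha).le
    rwa [hHcard, Nat.totient_prime hp] at this
  · rw [Gal.natDegree_minpoly_eq_ncard_orbit hsep, orbit_eq_orbit_subgroup hp hroots ha, ha]
end
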